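/- Let I be an ideal of ℝ[x], let Q be an indexed set of polynomials, let c be a cut-off function for Q, and let w be a positive integer. If there is R ∈ ℝ, R ≥ 0, such that Q ⊢^{c,I}_{w,2} R − x² ≥ 0 for every variable x, then for every monomial m of degree at most 2d and every a ∈ ℝ there exists b ∈ ℝ, b ≥ 0, such that Q ⊢^{c,I}_{w,2d} a·m + b ≥ 0. -/

import Mathlib

open MvPolynomial

noncomputable section

/-- The sum of squares of a list of polynomials. -/
def sosOfI {σ : Type} (l : List (MvPolynomial σ ℝ)) : MvPolynomial σ ℝ :=
  (l.map (· ^ 2)).sum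

/-- A Positivstellensatz proof mod the ideal `I` of `goal ≥ 0` from the inequality
constraints `q j ≥ 0` (`j : Fin ℓ`) and the equality constraints `p j = 0`
(`j : Fin m`). -/
structure PSProofMod (σ : Type) (ℓ m : ℕ) (q : Fin ℓ → MvPolynomial σ ℝ)
    (p : Fin m → MvPolynomial σ ℝ) (I : Ideal (MvPolynomial σ ℝ))
    (goal : MvPolynomial σ ℝ) : Type where
  Js : Finset (Finset (Fin ℓ))
  empty_not_mem : ∅ ∉ Js
  r0 : List (MvPolynomial σ ℝ)
  r : Finset (Fin ℓ) → List (MvPolynomial σ ℝ)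
  t : Fin m → MvPolynomial σ ℝ
  identity : goal - (sosOfI r0 + ∑ J ∈ Js, sosOfI (r J) * ∏ j ∈ J, q j
      + ∑ j, t j * p j) ∈ I

/-- A cut-off function for the system `q, p`. -/
def IsCutoffI {σ : Type} {ℓ m : ℕ} (q : Fin ℓ → MvPolynomial σ ℝ)
    (p : Fin m → MvPolynomial σ ℝ) (c : Finset (Fin ℓ) ⊕ Fin m → ℕ) : Prop :=
  (∀ J : Finset (Fin ℓ), ∑ j ∈ J, (q j).totalDegree ≤ c (Sum.inl J)) ∧
  (∀ j : Fin m, (p j).totalDegree ≤ c (Sum.inr j))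

/-- The proof has degree mod `c` at most `d` (the zero polynomial having
degree `−∞`). -/
def PSProofMod.degreeModLE {σ : Type} {ℓ m : ℕ} {q : Fin ℓ → MvPolynomial σ ℝ}
    {p : Fin m → MvPolynomial σ ℝ} {I : Ideal (MvPolynomial σ ℝ)}
    {goal : MvPolynomial σ ℝ} (π : PSProofMod σ ℓ m q p I goal)
    (c : Finset (Fin ℓ) ⊕ Fin m → ℕ) (d : ℕ) : Prop :=
  goal.totalDegree ≤ d ∧ (sosOfI π.r0).totalDegree ≤ d ∧
  (∀ J ∈ π.Js, sosOfI (π.r J) ≠ 0 → (sosOfI (π.r J)).totalDegree + c (Sum.inl J) ≤ d) ∧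
  (∀ j, π.t j ≠ 0 → (π.t j).totalDegree + c (Sum.inr j) ≤ d)

/-- The proof has product-width at most `w`. -/
def PSProofMod.widthLE {σ : Type} {ℓ m : ℕ} {q : Fin ℓ → MvPolynomial σ ℝ}
    {p : Fin m → MvPolynomial σ ℝ} {I : Ideal (MvPolynomial σ ℝ)}
    {goal : MvPolynomial σ ℝ} (π : PSProofMod σ ℓ m q p I goal) (w : ℕ) : Prop :=
  ∀ J ∈ π.Js, J.card ≤ w

/-- `PS^{c,I}_{w,d}(Q)`: the cone of polynomials of degree at most `d` with a PS
proof mod `I` of degree mod `c` at most `d` and product-width at most `w`.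
`Q ⊢^{c,I}_{w,d} a ≥ b` is expressed as `a - b ∈ PSconeI …`. -/
def PSconeI (σ : Type) (ℓ m : ℕ) (q : Fin ℓ → MvPolynomial σ ℝ)
    (p : Fin m → MvPolynomial σ ℝ) (I : Ideal (MvPolynomial σ ℝ))
    (c : Finset (Fin ℓ) ⊕ Fin m → ℕ) (w d : ℕ) : Set (MvPolynomial σ ℝ) :=
  {g | g.totalDegree ≤ d ∧
    ∃ π : PSProofMod σ ℓ m q p I g, π.degreeModLE c d ∧ π.widthLE w}


/- `PS^{c,I}_{w,•}(Q)` contains the squares and is closed under sums, under nonnegative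
scalars and under multiplication by squares. From `R - x² ≥ 0` and
`R^{i+j} - m₁²m₂² = R^i (R^j - m₂²) + m₂² (R^i - m₁²)` one gets `R^{|β|} - (x^β)² ≥ 0` in degree
`2|β|`. Splitting `α = β + γ` with `|β|, |γ| ≤ d`, the identity
`a x^β x^γ + |a|/2 (R^{|β|} + R^{|γ|}) = |a|/2 ((x^β ± x^γ)² + (R^{|β|} - (x^β)²) + (R^{|γ|} - (x^γ)²))`
is a proof of degree `2d`. -/

lemma MvPolynomial.totalDegree_add_add_le_of_ne_zero {σ R : Type*} [CommSemiring R]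
    {a b : MvPolynomial σ R} {k d : ℕ} (ha : a ≠ 0 → a.totalDegree + k ≤ d)
    (hb : b ≠ 0 → b.totalDegree + k ≤ d) (hab : a + b ≠ 0) : (a + b).totalDegree + k ≤ d := by
  rcases eq_or_ne a 0 with rfl | ha0
  · simpa using hb (by simpa using hab)
  rcases eq_or_ne b 0 with rfl | hb0
  · simpa using ha ha0
  have := totalDegree_add a b
  have := ha ha0
  have := hb hb0
  omega

lemma sosOfI_append {σ : Type} (l₁ l₂ : List (MvPolynomial σ ℝ)) :
    sosOfI (l₁ ++ l₂) = sosOfI l₁ + sosOfI l₂ := by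
  simp [sosOfI]

lemma sosOfI_map_mul {σ : Type} (h : MvPolynomial σ ℝ) (l : List (MvPolynomial σ ℝ)) :
    sosOfI (l.map (h * ·)) = h ^ 2 * sosOfI l := by
  induction l with
  | nil => simp [sosOfI]
  | cons a l ih => simp_all [sosOfI, mul_pow, mul_add]

namespace PSconeI

variable {σ : Type} {ℓ m : ℕ} {q : Fin ℓ → MvPolynomial σ ℝ} {p : Fin m → MvPolynomial σ ℝ}
  {I : Ideal (MvPolynomial σ ℝ)} {c : Finset (Fin ℓ) ⊕ Fin m → ℕ} {w : ℕ}

lemma mono {d₁ d₂ : ℕ} (h : d₁ ≤ d₂) {g : MvPolynomial σ ℝ}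
    (hg : g ∈ PSconeI σ ℓ m q p I c w d₁) : g ∈ PSconeI σ ℓ m q p I c w d₂ := by
  obtain ⟨hd, π, ⟨h₁, h₂, h₃, h₄⟩, hπw⟩ := hg
  exact ⟨hd.trans h, π, ⟨h₁.trans h, h₂.trans h,
    fun J hJ hne => (h₃ J hJ hne).trans h, fun j hj => (h₄ j hj).trans h⟩, hπw⟩

lemma sq_mem {f : MvPolynomial σ ℝ} {d : ℕ} (hf : f.totalDegree ≤ d) :
    f ^ 2 ∈ PSconeI σ ℓ m q p I c w (2 * d) := by
  have hdeg : (f ^ 2).totalDegree ≤ 2 * d := (totalDegree_pow f 2).trans (by omega)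
  refine ⟨hdeg, ⟨∅, Finset.notMem_empty _, [f], fun _ => [], fun _ => 0, ?_⟩,
    ⟨hdeg, by simpa [sosOfI] using hdeg, by simp, by simp⟩, by simp [PSProofMod.widthLE]⟩
  simp [sosOfI]

lemma zero_mem (d : ℕ) : (0 : MvPolynomial σ ℝ) ∈ PSconeI σ ℓ m q p I c w d :=
  mono (Nat.zero_le d) (by simpa using sq_mem (f := (0 : MvPolynomial σ ℝ)) (d := 0) (by simp))

lemma add_mem {g₁ g₂ : MvPolynomial σ ℝ} {d : ℕ}
    (hg₁ : g₁ ∈ PSconeI σ ℓ m q p I c w d) (hg₂ : g₂ ∈ PSconeI σ ℓ m q p I c w d) :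
    g₁ + g₂ ∈ PSconeI σ ℓ m q p I c w d := by
  obtain ⟨hd₁, π₁, ⟨-, h₁₂, h₁₃, h₁₄⟩, hw₁⟩ := hg₁
  obtain ⟨hd₂, π₂, ⟨-, h₂₂, h₂₃, h₂₄⟩, hw₂⟩ := hg₂
  classical
  -- `π.r J` is unconstrained in degree for `J ∉ π.Js`, so it must not be carried over
  let r : Finset (Fin ℓ) → List (MvPolynomial σ ℝ) := fun J =>
    (if J ∈ π₁.Js then π₁.r J else []) ++ (if J ∈ π₂.Js then π₂.r J else [])
  have hr : ∀ J, sosOfI (r J) = (if J ∈ π₁.Js then sosOfI (π₁.r J) else 0)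
      + (if J ∈ π₂.Js then sosOfI (π₂.r J) else 0) := fun J => by
    simp only [r, sosOfI_append]
    congr 1 <;> split_ifs <;> rfl
  have hsum : ∑ J ∈ π₁.Js ∪ π₂.Js, sosOfI (r J) * ∏ j ∈ J, q j
      = ∑ J ∈ π₁.Js, sosOfI (π₁.r J) * ∏ j ∈ J, q j
        + ∑ J ∈ π₂.Js, sosOfI (π₂.r J) * ∏ j ∈ J, q j := by
    simp only [hr, add_mul, ite_mul, zero_mul, Finset.sum_add_distrib, Finset.sum_ite_mem,
      Finset.union_inter_cancel_left, Finset.union_inter_cancel_right]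
  have hdeg : (g₁ + g₂).totalDegree ≤ d := (totalDegree_add g₁ g₂).trans (max_le hd₁ hd₂)
  refine ⟨hdeg, ⟨π₁.Js ∪ π₂.Js, by simp [π₁.empty_not_mem, π₂.empty_not_mem],
    π₁.r0 ++ π₂.r0, r, fun j => π₁.t j + π₂.t j, ?_⟩, ⟨hdeg, ?_, ?_, ?_⟩, ?_⟩
  · convert I.add_mem π₁.identity π₂.identity using 1
    simp only [sosOfI_append, hsum, add_mul, Finset.sum_add_distrib]
    ring
  · rw [sosOfI_append]
    exact (totalDegree_add _ _).trans (max_le h₁₂ h₂₂)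
  · intro J _ hne
    rw [hr J] at hne ⊢
    refine totalDegree_add_add_le_of_ne_zero ?_ ?_ hne
    · split_ifs with hJ
      exacts [h₁₃ J hJ, (absurd rfl ·)]
    · split_ifs with hJ
      exacts [h₂₃ J hJ, (absurd rfl ·)]
  · exact fun j => totalDegree_add_add_le_of_ne_zero (h₁₄ j) (h₂₄ j)
  · intro J hJ
    rcases Finset.mem_union.mp hJ with hJ | hJ
    exacts [hw₁ J hJ, hw₂ J hJ]

lemma sq_mul_mem {h g : MvPolynomial σ ℝ} {e d : ℕ} (he : h.totalDegree ≤ e)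
    (hg : g ∈ PSconeI σ ℓ m q p I c w d) : h ^ 2 * g ∈ PSconeI σ ℓ m q p I c w (d + 2 * e) := by
  obtain ⟨hd, π, ⟨-, h₂, h₃, h₄⟩, hπw⟩ := hg
  have hmul : ∀ {f : MvPolynomial σ ℝ} {k : ℕ}, f.totalDegree ≤ k →
      (h ^ 2 * f).totalDegree ≤ k + 2 * e := fun {f k} hf => by
    have := totalDegree_mul (h ^ 2) f
    have := totalDegree_pow h 2
    omega
  refine ⟨hmul hd, ⟨π.Js, π.empty_not_mem, π.r0.map (h * ·), fun J => (π.r J).map (h * ·),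
    fun j => h ^ 2 * π.t j, ?_⟩, ⟨hmul hd, ?_, ?_, ?_⟩, hπw⟩
  · convert I.mul_mem_left (h ^ 2) π.identity using 1
    simp only [sosOfI_map_mul, mul_sub, mul_add, Finset.mul_sum, mul_assoc]
  · rw [sosOfI_map_mul]
    exact hmul h₂
  · intro J hJ hne
    rw [sosOfI_map_mul] at hne ⊢
    have := h₃ J hJ (right_ne_zero_of_mul hne)
    have := hmul (le_refl (sosOfI (π.r J)).totalDegree)
    omega
  · intro j hne
    have := h₄ j (right_ne_zero_of_mul hne)
    have := hmul (le_refl (π.t j).totalDegree)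
    dsimp only
    omega

lemma C_mul_mem {b : ℝ} (hb : 0 ≤ b) {g : MvPolynomial σ ℝ} {d : ℕ}
    (hg : g ∈ PSconeI σ ℓ m q p I c w d) : C b * g ∈ PSconeI σ ℓ m q p I c w d := by
  have := sq_mul_mem (h := C √b) (totalDegree_C √b).le hg
  rwa [← C_pow, Real.sq_sqrt hb, mul_zero, add_zero] at this

variable {R : ℝ}

lemma sub_mul_sq_mem (hR : 0 ≤ R) {m₁ m₂ : MvPolynomial σ ℝ} {i j : ℕ} (hm₂ : m₂.totalDegree ≤ j)
    (h₁ : C (R ^ i) - m₁ ^ 2 ∈ PSconeI σ ℓ m q p I c w (2 * i))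
    (h₂ : C (R ^ j) - m₂ ^ 2 ∈ PSconeI σ ℓ m q p I c w (2 * j)) :
    C (R ^ (i + j)) - (m₁ * m₂) ^ 2 ∈ PSconeI σ ℓ m q p I c w (2 * (i + j)) := by
  have hsplit : C (R ^ (i + j)) - (m₁ * m₂) ^ 2
      = C (R ^ i) * (C (R ^ j) - m₂ ^ 2) + m₂ ^ 2 * (C (R ^ i) - m₁ ^ 2) := by
    rw [pow_add, C_mul]
    ring
  rw [hsplit, mul_add 2 i j]
  exact add_mem (mono (by omega) (C_mul_mem (pow_nonneg hR i) h₂)) (sq_mul_mem hm₂ h₁)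

lemma sub_X_pow_sq_mem (hR : 0 ≤ R) {v : σ} (hv : C R - X v ^ 2 ∈ PSconeI σ ℓ m q p I c w 2)
    (n : ℕ) : C (R ^ n) - (X v ^ n) ^ 2 ∈ PSconeI σ ℓ m q p I c w (2 * n) := by
  induction n with
  | zero => simpa using zero_mem 0
  | succ n ih =>
    rw [pow_succ (X v)]
    exact sub_mul_sq_mem hR (totalDegree_X v).le ih (by simpa using hv)

lemma sub_monomial_sq_mem (hR : 0 ≤ R)
    (hball : ∀ v : σ, C R - X v ^ 2 ∈ PSconeI σ ℓ m q p I c w 2) (β : σ →₀ ℕ) :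
    C (R ^ β.degree) - monomial β 1 ^ 2 ∈ PSconeI σ ℓ m q p I c w (2 * β.degree) := by
  induction β using Finsupp.induction_linear with
  | zero => simpa using zero_mem 0
  | add β γ hβ hγ =>
    rw [map_add, ← mul_one (1 : ℝ), ← monomial_mul]
    exact sub_mul_sq_mem hR (totalDegree_monomial_le γ 1) hβ hγ
  | single v n =>
    rw [Finsupp.degree_single, ← X_pow_eq_monomial]
    exact sub_X_pow_sq_mem hR (hball v) n

lemma C_mul_mul_add_mem {m₁ m₂ : MvPolynomial σ ℝ} {R₁ R₂ : ℝ} {d : ℕ}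
    (hm₁ : m₁.totalDegree ≤ d) (hm₂ : m₂.totalDegree ≤ d)
    (h₁ : C R₁ - m₁ ^ 2 ∈ PSconeI σ ℓ m q p I c w (2 * d))
    (h₂ : C R₂ - m₂ ^ 2 ∈ PSconeI σ ℓ m q p I c w (2 * d)) (a : ℝ) :
    C a * (m₁ * m₂) + C (|a| / 2 * (R₁ + R₂)) ∈ PSconeI σ ℓ m q p I c w (2 * d) := by
  obtain ⟨ε, hε, hεa⟩ : ∃ ε : ℝ, ε ^ 2 = 1 ∧ ε * |a| = a := by
    rcases abs_choice a with h | h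
    exacts [⟨1, by norm_num, by rw [h, one_mul]⟩, ⟨-1, by norm_num, by rw [h]; ring⟩]
  have hdeg : (m₁ + C ε * m₂).totalDegree ≤ d :=
    (totalDegree_add _ _).trans <| max_le hm₁ <| (totalDegree_mul _ _).trans <| by
      rw [totalDegree_C]
      omega
  have hCa : (C a : MvPolynomial σ ℝ) = 2 * C ε * C (|a| / 2) := by
    rw [← map_ofNat C 2, ← C_mul, ← C_mul]
    congr 1
    linear_combination -hεa
  have hCε : (C ε : MvPolynomial σ ℝ) ^ 2 = 1 := by rw [← C_pow, hε, C_1]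
  have hsplit : C a * (m₁ * m₂) + C (|a| / 2 * (R₁ + R₂))
      = C (|a| / 2) * ((m₁ + C ε * m₂) ^ 2 + (C R₁ - m₁ ^ 2) + (C R₂ - m₂ ^ 2)) := by
    rw [hCa, C_mul, C_add]
    linear_combination (-(C (|a| / 2) * m₂ ^ 2)) * hCε
  rw [hsplit]
  exact C_mul_mem (by positivity) (add_mem (add_mem (sq_mem hdeg) h₁) h₂)

end PSconeI

theorem statement14_general (σ : Type) (ℓ m : ℕ) (q : Fin ℓ → MvPolynomial σ ℝ)
    (p : Fin m → MvPolynomial σ ℝ) (I : Ideal (MvPolynomial σ ℝ))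
    (c : Finset (Fin ℓ) ⊕ Fin m → ℕ) (w : ℕ)
    (R : ℝ) (hR : 0 ≤ R)
    (hball : ∀ v : σ, (C R - X v ^ 2 : MvPolynomial σ ℝ) ∈ PSconeI σ ℓ m q p I c w 2)
    (d : ℕ) (α : σ →₀ ℕ) (hα : (α.sum fun _ e => e) ≤ 2 * d) (a : ℝ) :
    ∃ b : ℝ, 0 ≤ b ∧
      (C a * (monomial α 1 : MvPolynomial σ ℝ) + C b)
        ∈ PSconeI σ ℓ m q p I c w (2 * d) := by
  obtain ⟨β, hβα, hβ⟩ := α.exists_le_degree_eq (min d α.degree) (min_le_right _ _)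
  obtain ⟨γ, rfl⟩ := exists_add_of_le hβα
  have hγ : γ.degree ≤ d := by
    have : (β + γ).degree = β.degree + γ.degree := map_add _ _ _
    change (β + γ).degree ≤ 2 * d at hα
    omega
  have bounded : ∀ δ : σ →₀ ℕ, δ.degree ≤ d →
      (monomial δ 1 : MvPolynomial σ ℝ).totalDegree ≤ d ∧
        C (R ^ δ.degree) - monomial δ 1 ^ 2 ∈ PSconeI σ ℓ m q p I c w (2 * d) := fun δ hδ =>
    ⟨(totalDegree_monomial_le δ 1).trans hδ,
      PSconeI.mono (by omega) (PSconeI.sub_monomial_sq_mem hR hball δ)⟩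
  obtain ⟨hβdeg, hβmem⟩ := bounded β (by omega)
  obtain ⟨hγdeg, hγmem⟩ := bounded γ hγ
  refine ⟨|a| / 2 * (R ^ β.degree + R ^ γ.degree), by positivity, ?_⟩
  rw [← mul_one (1 : ℝ), ← monomial_mul]
  exact PSconeI.C_mul_mul_add_mem hβdeg hγdeg hβmem hγmem a

/-- **Lemma (bounded monomials).** If `Q ⊢^{c,I}_{w,2} R − x² ≥ 0` for every
variable `x` and some `R ≥ 0`, then for every monomial `m₀ = monomial α 1` of
degree at most `2d` and every `a ∈ ℝ` there is `b ≥ 0` with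
`Q ⊢^{c,I}_{w,2d} a·m₀ + b ≥ 0`. -/
theorem statement14 (σ : Type) (ℓ m : ℕ) (q : Fin ℓ → MvPolynomial σ ℝ)
    (p : Fin m → MvPolynomial σ ℝ) (I : Ideal (MvPolynomial σ ℝ))
    (c : Finset (Fin ℓ) ⊕ Fin m → ℕ) (hc : IsCutoffI q p c) (w : ℕ) (hw : 0 < w)
    (R : ℝ) (hR : 0 ≤ R)
    (hball : ∀ v : σ, (C R - X v ^ 2 : MvPolynomial σ ℝ) ∈ PSconeI σ ℓ m q p I c w 2)
    (d : ℕ) (α : σ →₀ ℕ) (hα : (α.sum fun _ e => e) ≤ 2 * d) (a : ℝ) :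
    ∃ b : ℝ, 0 ≤ b ∧
      (C a * (monomial α 1 : MvPolynomial σ ℝ) + C b)
        ∈ PSconeI σ ℓ m q p I c w (2 * d) :=
  statement14_general σ ℓ m q p I c w R hR hball d α hα a
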